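/- Let m be an odd positive integer, F = 𝔽_{2^m}, and let f : F → F with f(0) = 0. If the Preparata-like code P_f has minimum distance 5 (i.e., any two distinct codewords (S,T), (S′,T′) satisfy |S △ S′| + |T △ T′| ≥ 5), then f is crooked. -/

import Mathlib

/-!
Codewords of weight at most four are excluded: `({b + c}, {b, c})` forces `f` to be injective
and `(∅, {x, y, z, x + y + z})` gives the second condition. In characteristic two the third
condition reads `D_a f x + D_a f y + D_a f z ≠ 0` with `D_a f x = f x + f (x + a)`. If it fails
with `x ∉ {0, a}` and some codeword `(S, T)` has `∑ S = z`, then `(S ∆ {x, x + a}, T ∆ {y, y + a})`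
is a codeword at distance four from it.

Such a codeword exists for every `z`. For `c ≠ 0` the image of `D_c f` has at least `|F| / 2`
elements (its fibres are `{u, u + c}`) and is disjoint from its translate by `f c` (again by a
codeword of weight four), so the two cover `F`. Counting pairs `(c, u)` with `D_c f u = f z`
shows that `f z` misses the image of some `D_c f`, so `f z = f c + f u + f (u + c)` and
`({z}, {z} ∆ {c, u, u + c})` is a codeword.
-/

open scoped symmDiff

/-- `f` is crooked: `f 0 = 0`; `f x + f y + f z ≠ f (x+y+z)` for pairwise
distinct `x, y, z`; and `f x + f y + f z ≠ f (x+a) + f (y+a) + f (z+a)`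
for every `a ≠ 0`. -/
def IsCrooked {F : Type*} [Field F] (f : F → F) : Prop :=
  f 0 = 0 ∧
  (∀ x y z : F, x ≠ y → x ≠ z → y ≠ z → f x + f y + f z ≠ f (x + y + z)) ∧
  (∀ x y z a : F, a ≠ 0 → f x + f y + f z ≠ f (x + a) + f (y + a) + f (z + a))

/-- The Preparata-like code `P_f`: pairs `(S, T)` with `S ⊆ F \ {0}`, `T ⊆ F`,
`|T|` even, `∑_{r∈S} r = ∑_{r∈T} r`, and
`f (∑_{r∈S} r) = ∑_{r∈S} f r + ∑_{r∈T} f r`. -/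
def preparataCode {F : Type*} [Field F] [DecidableEq F] (f : F → F) :
    Set (Finset F × Finset F) :=
  {ST | (0 : F) ∉ ST.1 ∧ Even ST.2.card ∧
    (∑ r ∈ ST.1, r) = (∑ r ∈ ST.2, r) ∧
    f (∑ r ∈ ST.1, r) = (∑ r ∈ ST.1, f r) + (∑ r ∈ ST.2, f r)}

open Finset Function
open scoped fwdDiff

section SymmDiff

variable {α : Type*} [DecidableEq α]

theorem Finset.sum_add_sum_eq_sum_symmDiff_add {M : Type*} [AddCommMonoid M] (s t : Finset α)
    (g : α → M) : ∑ x ∈ s, g x + ∑ x ∈ t, g x = ∑ x ∈ s ∆ t, g x + 2 • ∑ x ∈ s ∩ t, g x := by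
  rw [← sum_union_inter, two_nsmul, ← add_assoc, symmDiff_eq_sup_sdiff_inf, sup_eq_union,
    inf_eq_inter, sum_sdiff (inter_subset_left.trans subset_union_left)]

theorem Finset.even_card_symmDiff_iff (s t : Finset α) :
    Even #(s ∆ t) ↔ (Even #s ↔ Even #t) := by
  have h := sum_add_sum_eq_sum_symmDiff_add s t (fun _ ↦ 1)
  simp only [← card_eq_sum_ones, smul_eq_mul] at h
  rw [← Nat.even_add, h, Nat.even_add]
  simp

theorem CharTwo.sum_symmDiff {R : Type*} [Ring R] [CharP R 2] (s t : Finset α) (g : α → R) :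
    ∑ x ∈ s ∆ t, g x = ∑ x ∈ s, g x + ∑ x ∈ t, g x := by
  rw [sum_add_sum_eq_sum_symmDiff_add, two_nsmul, CharTwo.add_self_eq_zero, add_zero]

end SymmDiff

section DerivativeCounting

variable {F : Type*} [Field F] [CharP F 2] {f : F → F} {a : F}

/-- In characteristic two this is equivalent to `f` being almost perfect nonlinear. -/
def IsAPN (f : F → F) : Prop :=
  ∀ x y z : F, x ≠ y → x ≠ z → y ≠ z → f x + f y + f z ≠ f (x + y + z)

theorem fwdDiff_apply_eq_add (f : F → F) (a x : F) : Δ_[a] f x = f x + f (x + a) := by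
  simp only [fwdDiff, CharTwo.sub_eq_add, add_comm]

theorem fwdDiff_apply_eq_of_eq_zero_or_eq (hf0 : f 0 = 0) {u : F} (hu : u = 0 ∨ u = a) :
    Δ_[a] f u = f a := by
  rw [fwdDiff_apply_eq_add]
  rcases hu with rfl | rfl <;> grind

theorem IsAPN.eq_or_eq_add_of_fwdDiff_eq (hf : IsAPN f) (ha : a ≠ 0) {u w : F}
    (h : Δ_[a] f u = Δ_[a] f w) : w = u ∨ w = u + a := by
  by_contra! hw
  refine hf u (u + a) w (by grind) (Ne.symm hw.1) (Ne.symm hw.2) ?_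
  rw [show u + (u + a) + w = w + a by grind]
  simp only [fwdDiff_apply_eq_add] at h
  grind

theorem Function.Injective.exists_forall_fwdDiff_ne [Fintype F] [DecidableEq F] (hf : Injective f)
    (hF : 2 < Fintype.card F) (τ : F) : ∃ a ≠ 0, ∀ u, Δ_[a] f u ≠ τ := by
  by_contra! h
  let X (a : F) : Finset F := {u | Δ_[a] f u = τ}
  have hdisj : ((univ.erase 0 : Finset F) : Set F).PairwiseDisjoint X := by
    intro a _ b _ hab
    refine disjoint_left.2 fun u hua hub ↦ hab (add_left_cancel (hf (?_ : f (u + a) = f (u + b))))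
    simp only [X, fwdDiff] at hua hub
    grind
  have hX : ∀ a ∈ univ.erase 0, 2 ≤ #(X a) := by
    intro a ha
    obtain ⟨u, hu⟩ := h a (ne_of_mem_erase ha)
    have hpair : ({u, u + a} : Finset F) ⊆ X a := by
      simp only [insert_subset_iff, singleton_subset_iff, X, mem_filter, mem_univ, true_and]
      simp only [fwdDiff_apply_eq_add] at hu ⊢
      grind
    calc 2 = #{u, u + a} := (card_pair (by grind [ne_of_mem_erase ha])).symm
      _ ≤ #(X a) := card_le_card hpair
  have hcount : 2 * (Fintype.card F - 1) ≤ Fintype.card F := calc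
    2 * (Fintype.card F - 1) = ∑ a ∈ univ.erase (0 : F), 2 := by
      simp [card_erase_of_mem, mul_comm]
    _ ≤ ∑ a ∈ univ.erase 0, #(X a) := sum_le_sum hX
    _ = #((univ.erase 0).biUnion X) := (card_biUnion hdisj).symm
    _ ≤ Fintype.card F := card_le_univ _
  omega

theorem IsAPN.exists_fwdDiff_eq_or [Fintype F] [DecidableEq F] (hf : IsAPN f) (ha : a ≠ 0)
    {b : F} (hb : ∀ u w, Δ_[a] f u + Δ_[a] f w ≠ b) (τ : F) :
    (∃ u, Δ_[a] f u = τ) ∨ ∃ u, Δ_[a] f u = τ + b := by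
  set A := univ.image (Δ_[a] f)
  have hA : Fintype.card F ≤ 2 * #A := card_le_mul_card_image univ 2 fun c hc ↦ by
    obtain ⟨u, -, rfl⟩ := mem_image.1 hc
    calc #{w ∈ univ | Δ_[a] f w = Δ_[a] f u} ≤ #{u, u + a} := card_le_card fun w hw ↦ by
          simpa using hf.eq_or_eq_add_of_fwdDiff_eq ha (mem_filter.1 hw).2.symm
      _ ≤ 2 := card_le_two
  have hdisj : Disjoint A (A.image (· + b)) := by
    refine disjoint_left.2 fun x hx hx' ↦ ?_
    obtain ⟨u, -, rfl⟩ := mem_image.1 hx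
    obtain ⟨_, hw, hwu⟩ := mem_image.1 hx'
    obtain ⟨w, -, rfl⟩ := mem_image.1 hw
    exact hb u w (by grind)
  have hcover : A ∪ A.image (· + b) = univ := by
    refine eq_univ_of_card _ (le_antisymm (card_le_univ _) ?_)
    rw [card_union_of_disjoint hdisj, card_image_of_injective _ (add_left_injective b)]
    omega
  rcases mem_union.1 (hcover ▸ mem_univ τ) with hτ | hτ
  · obtain ⟨u, -, hu⟩ := mem_image.1 hτ
    exact Or.inl ⟨u, hu⟩
  · obtain ⟨_, hx, hxτ⟩ := mem_image.1 hτ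
    obtain ⟨u, -, rfl⟩ := mem_image.1 hx
    exact Or.inr ⟨u, by grind⟩

end DerivativeCounting

def MinDistAtLeast {α : Type*} [DecidableEq α] (C : Set (Finset α × Finset α)) (d : ℕ) : Prop :=
  ∀ ST ∈ C, ∀ ST' ∈ C, ST ≠ ST' → d ≤ #(ST.1 ∆ ST'.1) + #(ST.2 ∆ ST'.2)

namespace MinDistAtLeast

variable {α : Type*} [DecidableEq α] {C : Set (Finset α × Finset α)} {d : ℕ}
  {S T A B : Finset α}

theorem le_card_add_card_of_symmDiff_mem (hC : MinDistAtLeast C d) (h : (S, T) ∈ C)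
    (h' : (S ∆ A, T ∆ B) ∈ C) (hAB : A.Nonempty ∨ B.Nonempty) : d ≤ #A + #B := by
  have hne : (S, T) ≠ (S ∆ A, T ∆ B) := fun h ↦ by
    simp only [Prod.mk.injEq] at h
    rcases hAB with hA | hB
    · exact hA.ne_empty (symmDiff_eq_left.1 h.1.symm)
    · exact hB.ne_empty (symmDiff_eq_left.1 h.2.symm)
  simpa only [symmDiff_symmDiff_cancel_left] using hC _ h _ h' hne

theorem le_card_add_card_of_mem (hC : MinDistAtLeast C d) (h₀ : (∅, ∅) ∈ C) (h : (A, B) ∈ C)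
    (hAB : A.Nonempty ∨ B.Nonempty) : d ≤ #A + #B := by
  refine hC.le_card_add_card_of_symmDiff_mem h₀ ?_ hAB
  rwa [← bot_eq_empty, bot_symmDiff, bot_symmDiff]

end MinDistAtLeast

section PreparataCode

variable {F : Type*} [Field F] [DecidableEq F] {f : F → F} {S T : Finset F}

theorem mem_preparataCode : (S, T) ∈ preparataCode f ↔ 0 ∉ S ∧ Even #T ∧
    ∑ r ∈ S, r = ∑ r ∈ T, r ∧ f (∑ r ∈ S, r) = ∑ r ∈ S, f r + ∑ r ∈ T, f r :=
  Iff.rfl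

theorem empty_mem_preparataCode (hf0 : f 0 = 0) : (∅, ∅) ∈ preparataCode f := by
  simp [mem_preparataCode, hf0]

variable [CharP F 2]

theorem injective_of_minDistAtLeast_five (hd : MinDistAtLeast (preparataCode f) 5)
    (hf0 : f 0 = 0) : Injective f := by
  intro b c hbc
  by_contra hne
  have hmem : ({b + c}, {b, c}) ∈ preparataCode f := by
    refine mem_preparataCode.2 ⟨?_, ?_, ?_, ?_⟩
    · simpa using (by grind : 0 ≠ b + c)
    · simp [card_pair hne]
    · simp [sum_pair hne]
    · simp only [sum_singleton, sum_pair hne, hbc]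
      grind
  have := hd.le_card_add_card_of_mem (empty_mem_preparataCode hf0) hmem (by simp)
  rw [card_singleton, card_pair hne] at this
  omega

theorem isAPN_of_minDistAtLeast_five (hd : MinDistAtLeast (preparataCode f) 5)
    (hf0 : f 0 = 0) : IsAPN f := by
  intro x y z hxy hxz hyz heq
  have hz : z ∉ ({x + y + z} : Finset F) := by grind
  have hy : y ∉ ({z, x + y + z} : Finset F) := by grind
  have hx : x ∉ ({y, z, x + y + z} : Finset F) := by grind
  have hcard : #({x, y, z, x + y + z} : Finset F) = 4 := by
    rw [card_insert_of_notMem hx, card_insert_of_notMem hy, card_pair (by simpa using hz)]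
  have hmem : (∅, {x, y, z, x + y + z}) ∈ preparataCode f := by
    refine mem_preparataCode.2 ⟨by simp, by rw [hcard]; decide, ?_, ?_⟩ <;>
    · rw [sum_insert hx, sum_insert hy, sum_pair (by simpa using hz)]
      simp only [sum_empty, hf0]
      grind
  have := hd.le_card_add_card_of_mem (empty_mem_preparataCode hf0) hmem (by simp)
  rw [card_empty, hcard] at this
  omega

theorem symmDiff_pairs_mem_preparataCode (hST : (S, T) ∈ preparataCode f) {a p q : F}
    (ha : a ≠ 0) (hp : p ≠ 0) (hpa : p ≠ a)
    (h : Δ_[a] f p + Δ_[a] f q + Δ_[a] f (∑ r ∈ S, r) = 0) :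
    (S ∆ {p, p + a}, T ∆ {q, q + a}) ∈ preparataCode f := by
  obtain ⟨h0, heven, hsum, hfS⟩ := mem_preparataCode.1 hST
  have hpp : p ≠ p + a := by grind
  have hqq : q ≠ q + a := by grind
  refine mem_preparataCode.2 ⟨?_, ?_, ?_, ?_⟩
  · simp only [mem_symmDiff, mem_insert, mem_singleton]
    grind
  · rw [even_card_symmDiff_iff, card_pair hqq]
    simpa using heven
  · rw [CharTwo.sum_symmDiff, CharTwo.sum_symmDiff, sum_pair hpp, sum_pair hqq, hsum]
    grind
  · rw [CharTwo.sum_symmDiff, CharTwo.sum_symmDiff, CharTwo.sum_symmDiff, sum_pair hpp,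
      sum_pair hpp, sum_pair hqq]
    simp only [fwdDiff_apply_eq_add] at h
    grind

theorem fwdDiff_add_fwdDiff_add_fwdDiff_sum_ne_zero (hd : MinDistAtLeast (preparataCode f) 5)
    (hST : (S, T) ∈ preparataCode f) {a p : F} (ha : a ≠ 0) (hp : p ≠ 0) (hpa : p ≠ a) (q : F) :
    Δ_[a] f p + Δ_[a] f q + Δ_[a] f (∑ r ∈ S, r) ≠ 0 := fun h ↦ by
  have := hd.le_card_add_card_of_symmDiff_mem hST
    (symmDiff_pairs_mem_preparataCode hST ha hp hpa h) (by simp)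
  have := card_le_two (a := p) (b := p + a)
  have := card_le_two (a := q) (b := q + a)
  omega

theorem fwdDiff_add_fwdDiff_ne (hd : MinDistAtLeast (preparataCode f) 5) (hf0 : f 0 = 0)
    {a : F} (ha : a ≠ 0) (u w : F) : Δ_[a] f u + Δ_[a] f w ≠ f a := by
  by_cases hu : u ≠ 0 ∧ u ≠ a
  · have := fwdDiff_add_fwdDiff_add_fwdDiff_sum_ne_zero hd (empty_mem_preparataCode hf0) ha
      hu.1 hu.2 w
    rw [sum_empty, fwdDiff_apply_eq_of_eq_zero_or_eq hf0 (.inl rfl)] at this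
    grind
  · rw [fwdDiff_apply_eq_of_eq_zero_or_eq hf0 (by tauto), fwdDiff_apply_eq_add]
    have := (injective_of_minDistAtLeast_five hd hf0).ne (a₁ := w) (a₂ := w + a) (by grind)
    grind

theorem singleton_symmDiff_mem_preparataCode {σ c u : F} (hσ : σ ≠ 0) (hc : c ≠ 0)
    (hu : u ≠ 0) (huc : u ≠ c) (h : f c + f u + f (u + c) = f σ) :
    ({σ}, {σ} ∆ {c, u, u + c}) ∈ preparataCode f := by
  have huu : u ≠ u + c := by grind
  have hcu : c ∉ ({u, u + c} : Finset F) := by grind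
  refine mem_preparataCode.2 ⟨by simpa using hσ.symm, ?_, ?_, ?_⟩
  · rw [even_card_symmDiff_iff, card_insert_of_notMem hcu, card_pair huu, card_singleton]
    decide
  · rw [CharTwo.sum_symmDiff, sum_insert hcu, sum_pair huu]
    grind
  · rw [CharTwo.sum_symmDiff, sum_insert hcu, sum_pair huu]
    grind

theorem exists_mem_preparataCode_sum_eq [Fintype F] (hd : MinDistAtLeast (preparataCode f) 5)
    (hf0 : f 0 = 0) (hF : 2 < Fintype.card F) (σ : F) :
    ∃ S T, (S, T) ∈ preparataCode f ∧ ∑ r ∈ S, r = σ := by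
  obtain rfl | hσ := eq_or_ne σ 0
  · exact ⟨∅, ∅, empty_mem_preparataCode hf0, sum_empty⟩
  have hinj := injective_of_minDistAtLeast_five hd hf0
  have hfσ : f σ ≠ 0 := hf0 ▸ hinj.ne hσ
  obtain ⟨c, hc, hcσ⟩ := hinj.exists_forall_fwdDiff_ne hF (f σ)
  obtain ⟨u, hu⟩ := ((isAPN_of_minDistAtLeast_five hd hf0).exists_fwdDiff_eq_or hc
    (fwdDiff_add_fwdDiff_ne hd hf0 hc) (f σ)).resolve_left (not_exists.2 hcσ)
  have hu0 : ¬(u = 0 ∨ u = c) := fun h ↦ by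
    rw [fwdDiff_apply_eq_of_eq_zero_or_eq hf0 h] at hu
    grind
  rw [fwdDiff_apply_eq_add] at hu
  exact ⟨{σ}, {σ} ∆ {c, u, u + c},
    singleton_symmDiff_mem_preparataCode hσ hc (by tauto) (by tauto) (by grind), sum_singleton _ _⟩

theorem fwdDiff_add_fwdDiff_add_fwdDiff_ne_zero [Fintype F]
    (hd : MinDistAtLeast (preparataCode f) 5) (hf0 : f 0 = 0) {a : F} (ha : a ≠ 0) (x y z : F) :
    Δ_[a] f x + Δ_[a] f y + Δ_[a] f z ≠ 0 := by
  have key : ∀ p q r, p ≠ 0 → p ≠ a → Δ_[a] f p + Δ_[a] f q + Δ_[a] f r ≠ 0 := by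
    intro p q r hp hpa
    have hF : 2 < Fintype.card F := by
      have := card_le_univ ({0, a, p} : Finset F)
      rwa [card_insert_of_notMem (by grind), card_pair hpa.symm] at this
    obtain ⟨S, T, hST, rfl⟩ := exists_mem_preparataCode_sum_eq hd hf0 hF r
    exact fwdDiff_add_fwdDiff_add_fwdDiff_sum_ne_zero hd hST ha hp hpa q
  by_cases hx : x ≠ 0 ∧ x ≠ a
  · exact key x y z hx.1 hx.2
  by_cases hy : y ≠ 0 ∧ y ≠ a
  · rw [add_comm (Δ_[a] f x)]
    exact key y x z hy.1 hy.2
  by_cases hz : z ≠ 0 ∧ z ≠ a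
  · rw [add_comm, ← add_assoc]
    exact key z x y hz.1 hz.2
  have hfa : f a ≠ 0 := hf0 ▸ (injective_of_minDistAtLeast_five hd hf0).ne ha
  simp only [fwdDiff_apply_eq_of_eq_zero_or_eq hf0 (by tauto : x = 0 ∨ x = a),
    fwdDiff_apply_eq_of_eq_zero_or_eq hf0 (by tauto : y = 0 ∨ y = a),
    fwdDiff_apply_eq_of_eq_zero_or_eq hf0 (by tauto : z = 0 ∨ z = a)]
  grind

theorem isCrooked_of_minDistAtLeast_five [Fintype F] (hd : MinDistAtLeast (preparataCode f) 5)
    (hf0 : f 0 = 0) : IsCrooked f := by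
  refine ⟨hf0, isAPN_of_minDistAtLeast_five hd hf0, fun x y z a ha h ↦ ?_⟩
  refine fwdDiff_add_fwdDiff_add_fwdDiff_ne_zero hd hf0 ha x y z ?_
  simp only [fwdDiff_apply_eq_add]
  grind

end PreparataCode

theorem crooked_of_preparata_min_dist_five_general {m : ℕ}
    {F : Type*} [Field F] [Fintype F] [DecidableEq F]
    (hcard : Fintype.card F = 2 ^ m)
    (f : F → F) (hf0 : f 0 = 0)
    (hdist : ∀ ST ∈ preparataCode f, ∀ ST' ∈ preparataCode f, ST ≠ ST' →
      5 ≤ (ST.1 ∆ ST'.1).card + (ST.2 ∆ ST'.2).card) :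
    IsCrooked f := by
  have h2 : (2 : F) = 0 := by
    have h := FiniteField.cast_card_eq_zero F
    rw [hcard, Nat.cast_pow, Nat.cast_ofNat] at h
    exact (pow_eq_zero_iff'.1 h).1
  have := CharTwo.of_one_ne_zero_of_two_eq_zero one_ne_zero h2
  exact isCrooked_of_minDistAtLeast_five hdist hf0

/-- If `P_f` has minimum distance `5` (any two distinct codewords are at
distance at least `5`), then `f` is crooked. -/
theorem crooked_of_preparata_min_dist_five {m : ℕ} (hm : 0 < m) (hmodd : Odd m)
    {F : Type*} [Field F] [Fintype F] [DecidableEq F]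
    (hcard : Fintype.card F = 2 ^ m)
    (f : F → F) (hf0 : f 0 = 0)
    (hdist : ∀ ST ∈ preparataCode f, ∀ ST' ∈ preparataCode f, ST ≠ ST' →
      5 ≤ (ST.1 ∆ ST'.1).card + (ST.2 ∆ ST'.2).card) :
    IsCrooked f :=
  crooked_of_preparata_min_dist_five_general hcard f hf0 hdist
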